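/- Let X, Y ∈ ℝ^{n×m}, Z = Y X⁺ X, and A★_k = P_k Y X⁺ with P_k the orthogonal projector onto the top-k left singular subspace of Z. Then ‖Y − A★_k X‖_F² = ‖Y − Y X⁺ X‖_F² + ∑_{i > k} σᵢ(Z)², where σᵢ(Z) are the singular values of Z in decreasing order. In particular, the minimal value of ‖Y − A X‖_F over rank-≤k matrices A equals (‖Y(I − X⁺X)‖_F² + ∑_{i>k} σᵢ(Z)²)^{1/2}. -/

import Mathlib

open scoped BigOperators Matrix

/-- Frobenius norm of a real matrix. -/
noncomputable def frobNorm {n m : ℕ} (M : Matrix (Fin n) (Fin m) ℝ) : ℝ :=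
  Real.sqrt (∑ i, ∑ j, (M i j) ^ 2)

/-- The four Moore–Penrose conditions. -/
def IsMoorePenrose {n m : ℕ} (X : Matrix (Fin n) (Fin m) ℝ)
    (Xp : Matrix (Fin m) (Fin n) ℝ) : Prop :=
  X * Xp * X = X ∧ Xp * X * Xp = Xp ∧ (X * Xp)ᵀ = X * Xp ∧ (Xp * X)ᵀ = Xp * X

/-!
`Q = X⁺X` is an orthogonal projector, and every `B = AX` satisfies `BQ = B`; so `Y − YQ` is
orthogonal to `YQ − B = Z − B` and `‖Y − B‖² = ‖Y − YQ‖² + ‖Z − B‖²`.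

If `(uᵢ)` is an orthonormal eigenbasis of `ZZᵀ` with eigenvalues `σᵢ²` and `P` is an orthogonal
projector, then `‖(I − P)Z‖² = tr(ZZᵀ(I − P)) = ∑ σᵢ² (1 − cᵢ)` with `cᵢ = ⟨uᵢ, Puᵢ⟩ ∈ [0, 1]`
and `∑ cᵢ = tr P`. For `P = P_k` this is exactly the tail `∑_{i ≥ k} σᵢ²`. If `rank B ≤ k`, take
for `P` the projector onto the column space of `B`: then `‖Z − B‖² ≥ ‖(I − P)Z‖²`, `∑ cᵢ ≤ k`,
and since `σ` is decreasing, `∑ σᵢ² cᵢ ≤ ∑_{i < k} σᵢ²` (Ky Fan), which gives the lower bound.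
-/

open Matrix
open scoped MatrixOrder

lemma trace_add_mul_transpose_add {ι κ : Type*} [Fintype ι] [Fintype κ] {M N : Matrix ι κ ℝ}
    (h : trace (M * Nᵀ) = 0) :
    trace ((M + N) * (M + N)ᵀ) = trace (M * Mᵀ) + trace (N * Nᵀ) := by
  have h' : trace (N * Mᵀ) = 0 := by
    rw [← trace_transpose, transpose_mul, transpose_transpose, h]
  simp only [transpose_add, Matrix.add_mul, Matrix.mul_add, trace_add, h, h']
  ring

lemma frobNorm_sq_eq_trace {n m : ℕ} (M : Matrix (Fin n) (Fin m) ℝ) :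
    frobNorm M ^ 2 = trace (M * Mᵀ) := by
  rw [frobNorm, Real.sq_sqrt (by positivity)]
  simp [trace, mul_apply, sq]

namespace IsStarProjection

variable {ι κ : Type*} [Fintype ι] [Fintype κ] {P : Matrix ι ι ℝ}

lemma transpose_eq (hP : IsStarProjection P) : Pᵀ = P :=
  (conjTranspose_eq_transpose_of_trivial P).symm.trans hP.isSelfAdjoint

lemma trace_mul_mul_transpose (hP : IsStarProjection P) (M : Matrix ι κ ℝ) :
    trace (P * M * (P * M)ᵀ) = trace (M * Mᵀ * P) := by
  rw [transpose_mul, hP.transpose_eq, ← Matrix.mul_assoc, trace_mul_comm, ← Matrix.mul_assoc,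
    ← Matrix.mul_assoc, hP.isIdempotentElem.eq, Matrix.mul_assoc, trace_mul_comm]

lemma trace_mul_transpose_eq_add [DecidableEq ι] (hP : IsStarProjection P) (M : Matrix ι κ ℝ) :
    trace (M * Mᵀ) = trace (P * M * (P * M)ᵀ) + trace ((1 - P) * M * ((1 - P) * M)ᵀ) := by
  have hcross : trace (P * M * ((1 - P) * M)ᵀ) = 0 := by
    rw [transpose_mul, hP.one_sub.transpose_eq, ← Matrix.mul_assoc, trace_mul_comm,
      ← Matrix.mul_assoc, ← Matrix.mul_assoc, hP.one_sub_mul_self, Matrix.zero_mul,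
      Matrix.zero_mul, trace_zero]
  rw [← trace_add_mul_transpose_add hcross, ← Matrix.add_mul, add_sub_cancel, Matrix.one_mul]

lemma dotProduct_mulVec_nonneg (hP : IsStarProjection P) (v : ι → ℝ) : 0 ≤ v ⬝ᵥ P *ᵥ v := by
  simpa using (nonneg_iff_posSemidef.mp hP.nonneg).dotProduct_mulVec_nonneg v

lemma dotProduct_mulVec_le [DecidableEq ι] (hP : IsStarProjection P) (v : ι → ℝ) :
    v ⬝ᵥ P *ᵥ v ≤ v ⬝ᵥ v := by
  have := hP.one_sub.dotProduct_mulVec_nonneg v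
  rwa [sub_mulVec, one_mulVec, dotProduct_sub, sub_nonneg] at this

end IsStarProjection

lemma exists_isStarProjection_mul_eq_self_trace_eq_rank {ι κ : Type*} [Fintype ι]
    [DecidableEq ι] [Fintype κ] [DecidableEq κ] (B : Matrix ι κ ℝ) :
    ∃ P : Matrix ι ι ℝ, IsStarProjection P ∧ P * B = B ∧ P.trace = B.rank := by
  set S := LinearMap.range (toEuclideanLin B)
  set e := (toEuclideanCLM (𝕜 := ℝ) (n := ι)).symm
  refine ⟨e S.starProjection, ?_, ?_, ?_⟩
  · exact IsStarProjection.map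
      (F := (EuclideanSpace ℝ ι →L[ℝ] EuclideanSpace ℝ ι) ≃⋆ₐ[ℝ] Matrix ι ι ℝ)
      isStarProjection_starProjection e
  · refine ext_of_mulVec_single fun j => ?_
    have hmem : WithLp.toLp 2 (B *ᵥ Pi.single j 1) ∈ S := ⟨WithLp.toLp 2 (Pi.single j 1), rfl⟩
    rw [← mulVec_mulVec, ← WithLp.ofLp_toLp 2 (B *ᵥ _), ← ofLp_toEuclideanCLM,
      StarAlgEquiv.apply_symm_apply, S.starProjection_eq_self_iff.mpr hmem]
  · have hproj : LinearMap.IsProj S (S.starProjection : EuclideanSpace ℝ ι →ₗ[ℝ] _) :=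
      ⟨S.starProjection_apply_mem, fun x hx => S.starProjection_eq_self_iff.mpr hx⟩
    rw [rank_eq_finrank_range_toLin B (EuclideanSpace.basisFun ι ℝ).toBasis
      (EuclideanSpace.basisFun κ ℝ).toBasis, ← toEuclideanLin_eq_toLin_orthonormal,
      ← hproj.trace, LinearMap.trace_eq_matrix_trace ℝ (EuclideanSpace.basisFun ι ℝ).toBasis]
    rfl

section Orthonormal

variable {ι κ : Type*} [Fintype ι] [DecidableEq κ] {w : κ → ι → ℝ}

lemma sum_vecMulVec_mulVec (hw : ∀ i j, w i ⬝ᵥ w j = if i = j then 1 else 0)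
    (s : Finset κ) (i : κ) :
    (∑ j ∈ s, vecMulVec (w j) (w j)) *ᵥ w i = if i ∈ s then w i else 0 := by
  simp only [sum_mulVec, vecMulVec_mulVec, hw, op_smul_eq_smul, ite_smul, one_smul,
    zero_smul]
  simp [Finset.sum_ite_eq']

lemma isStarProjection_sum_vecMulVec (hw : ∀ i j, w i ⬝ᵥ w j = if i = j then 1 else 0)
    (s : Finset κ) : IsStarProjection (∑ j ∈ s, vecMulVec (w j) (w j)) := by
  refine ⟨?_, ?_⟩
  · rw [IsIdempotentElem, Finset.mul_sum]
    refine Finset.sum_congr rfl fun j hj => ?_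
    rw [mul_vecMulVec, sum_vecMulVec_mulVec hw, if_pos hj]
  · rw [IsSelfAdjoint, star_eq_conjTranspose, conjTranspose_eq_transpose_of_trivial,
      transpose_sum]
    simp only [transpose_vecMulVec]

end Orthonormal

section OrthonormalBasis

variable {ι : Type*} [Fintype ι] [DecidableEq ι] {u : ι → ι → ℝ}

lemma sum_vecMulVec_self_eq_one (hu : ∀ i j, u i ⬝ᵥ u j = if i = j then 1 else 0) :
    ∑ i, vecMulVec (u i) (u i) = 1 := by
  have hU : of u * (of u)ᵀ = 1 := by
    ext i j
    simpa [mul_apply, one_apply, dotProduct] using hu i j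
  rw [← mul_eq_one_comm.mp hU]
  ext a b
  simp [mul_apply, Matrix.sum_apply, vecMulVec_apply]

lemma trace_eq_sum_dotProduct_mulVec (hu : ∀ i j, u i ⬝ᵥ u j = if i = j then 1 else 0)
    (A : Matrix ι ι ℝ) : trace A = ∑ i, u i ⬝ᵥ A *ᵥ u i := by
  conv_lhs => rw [← mul_one A, ← sum_vecMulVec_self_eq_one hu]
  simp only [Finset.mul_sum, trace_sum, mul_vecMulVec, trace_vecMulVec, dotProduct_comm]

lemma trace_mul_eq_sum_of_mulVec_eq_smul (hu : ∀ i j, u i ⬝ᵥ u j = if i = j then 1 else 0)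
    {A : Matrix ι ι ℝ} {μ : ι → ℝ} (hA : ∀ i, A *ᵥ u i = μ i • u i) (P : Matrix ι ι ℝ) :
    trace (A * P) = ∑ i, μ i * (u i ⬝ᵥ P *ᵥ u i) := by
  rw [trace_mul_comm, trace_eq_sum_dotProduct_mulVec hu]
  simp only [← mulVec_mulVec, hA, mulVec_smul, dotProduct_smul, smul_eq_mul]

end OrthonormalBasis

lemma sum_mul_le_sum_filter_lt {n : ℕ} (k : ℕ) {μ c : Fin n → ℝ} (hμ : Antitone μ)
    (hμ0 : ∀ i, 0 ≤ μ i) (hc0 : ∀ i, 0 ≤ c i) (hc1 : ∀ i, c i ≤ 1) (hc : ∑ i, c i ≤ k) :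
    ∑ i, μ i * c i ≤ ∑ i ∈ Finset.univ.filter (fun i : Fin n => (i : ℕ) < k), μ i := by
  set d : Fin n → ℝ := fun i => if (i : ℕ) < k then 1 else 0
  have hexpand (t : ℝ) :
      ∑ i, μ i * c i - ∑ i ∈ Finset.univ.filter (fun i : Fin n => (i : ℕ) < k), μ i
        = ∑ i, (μ i - t) * (c i - d i) + t * (∑ i, c i - ∑ i, d i) := by
    simp only [Finset.sum_filter, d, Finset.mul_sum, ← Finset.sum_sub_distrib,
      ← Finset.sum_add_distrib]
    refine Finset.sum_congr rfl fun i _ => ?_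
    split_ifs <;> ring
  -- a threshold `t` between the top `k` weights and the others makes every term nonpositive
  suffices ∃ t, (∀ i, (μ i - t) * (c i - d i) ≤ 0) ∧ t * (∑ i, c i - ∑ i, d i) ≤ 0 by
    obtain ⟨t, hterm, ht⟩ := this
    linarith [hexpand t, Finset.sum_nonpos fun i (_ : i ∈ Finset.univ) => hterm i]
  rcases lt_or_ge k n with hk | hk
  · refine ⟨μ ⟨k, hk⟩, fun i => ?_, ?_⟩
    · by_cases hi : (i : ℕ) < k
      · simp only [d, if_pos hi]
        exact mul_nonpos_of_nonneg_of_nonpos (sub_nonneg.2 (hμ (Fin.mk_le_of_le_val hi.le)))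
          (sub_nonpos.2 (hc1 i))
      · simp only [d, if_neg hi, sub_zero]
        exact mul_nonpos_of_nonpos_of_nonneg (sub_nonpos.2 (hμ (Fin.le_def.2 (not_lt.1 hi))))
          (hc0 i)
    · have hd : ∑ i, d i = k := by simp [d, Finset.sum_boole, Fin.card_filter_val_lt, hk.le]
      rw [hd]
      exact mul_nonpos_of_nonneg_of_nonpos (hμ0 _) (sub_nonpos.2 hc)
  · refine ⟨0, fun i => ?_, by simp⟩
    simp only [d, if_pos (i.2.trans_le hk), sub_zero]
    exact mul_nonpos_of_nonneg_of_nonpos (hμ0 i) (sub_nonpos.2 (hc1 i))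

lemma IsMoorePenrose.isStarProjection_mul {n m : ℕ} {X : Matrix (Fin n) (Fin m) ℝ}
    {Xp : Matrix (Fin m) (Fin n) ℝ} (h : IsMoorePenrose X Xp) : IsStarProjection (Xp * X) := by
  refine ⟨?_, ?_⟩
  · rw [IsIdempotentElem, ← Matrix.mul_assoc, h.2.1]
  · rw [IsSelfAdjoint, star_eq_conjTranspose, conjTranspose_eq_transpose_of_trivial, h.2.2.2]

lemma frobNorm_sub_sq_eq_add {n m : ℕ} {Q : Matrix (Fin m) (Fin m) ℝ} (hQ : IsStarProjection Q)
    (Y : Matrix (Fin n) (Fin m) ℝ) {B : Matrix (Fin n) (Fin m) ℝ} (hB : B * Q = B) :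
    frobNorm (Y - B) ^ 2 = frobNorm (Y - Y * Q) ^ 2 + frobNorm (Y * Q - B) ^ 2 := by
  have hcross : trace ((Y - Y * Q) * (Y * Q - B)ᵀ) = 0 := by
    have hYQ : Y - Y * Q = Y * (1 - Q) := by rw [Matrix.mul_sub, Matrix.mul_one]
    have hYB : Y * Q - B = (Y - B) * Q := by rw [Matrix.sub_mul, hB]
    rw [hYQ, hYB, transpose_mul, hQ.transpose_eq, Matrix.mul_assoc, ← Matrix.mul_assoc (1 - Q),
      hQ.one_sub_mul_self, Matrix.zero_mul, Matrix.mul_zero, trace_zero]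
  rw [frobNorm_sq_eq_trace, frobNorm_sq_eq_trace, frobNorm_sq_eq_trace,
    ← trace_add_mul_transpose_add hcross, sub_add_sub_cancel]

section EckartYoung

variable {n m : ℕ} {Z : Matrix (Fin n) (Fin m) ℝ} {σ : Fin n → ℝ} {u : Fin n → Fin n → ℝ}

lemma frobNorm_one_sub_mul_sq (huon : ∀ i j, u i ⬝ᵥ u j = if i = j then (1 : ℝ) else 0)
    (heig : ∀ i, (Z * Zᵀ) *ᵥ u i = (σ i ^ 2) • u i) {P : Matrix (Fin n) (Fin n) ℝ}
    (hP : IsStarProjection P) :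
    frobNorm ((1 - P) * Z) ^ 2 = ∑ i, σ i ^ 2 * (1 - u i ⬝ᵥ P *ᵥ u i) := by
  rw [frobNorm_sq_eq_trace, hP.one_sub.trace_mul_mul_transpose,
    trace_mul_eq_sum_of_mulVec_eq_smul huon heig]
  simp only [sub_mulVec, one_mulVec, dotProduct_sub, huon, if_pos]

lemma frobNorm_sub_mul_sum_vecMulVec_sq
    (huon : ∀ i j, u i ⬝ᵥ u j = if i = j then (1 : ℝ) else 0)
    (heig : ∀ i, (Z * Zᵀ) *ᵥ u i = (σ i ^ 2) • u i) (k : ℕ) :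
    frobNorm (Z - (∑ i ∈ Finset.univ.filter (fun i : Fin n => (i : ℕ) < k),
        vecMulVec (u i) (u i)) * Z) ^ 2 =
      ∑ i ∈ Finset.univ.filter (fun i : Fin n => k ≤ (i : ℕ)), σ i ^ 2 := by
  set P := ∑ i ∈ Finset.univ.filter (fun i : Fin n => (i : ℕ) < k), vecMulVec (u i) (u i)
  have hPZ : Z - P * Z = (1 - P) * Z := by rw [Matrix.sub_mul, Matrix.one_mul]
  rw [hPZ, frobNorm_one_sub_mul_sq huon heig (isStarProjection_sum_vecMulVec huon _)]
  simp only [sum_vecMulVec_mulVec huon]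
  rw [Finset.sum_filter]
  refine Finset.sum_congr rfl fun i _ => ?_
  by_cases hi : (i : ℕ) < k <;> simp [hi, huon]

lemma sum_filter_le_frobNorm_sub_sq (huon : ∀ i j, u i ⬝ᵥ u j = if i = j then (1 : ℝ) else 0)
    (heig : ∀ i, (Z * Zᵀ) *ᵥ u i = (σ i ^ 2) • u i) (hσdec : Antitone σ) (hσnn : ∀ i, 0 ≤ σ i)
    {k : ℕ} {B : Matrix (Fin n) (Fin m) ℝ} (hB : B.rank ≤ k) :
    ∑ i ∈ Finset.univ.filter (fun i : Fin n => k ≤ (i : ℕ)), σ i ^ 2 ≤ frobNorm (Z - B) ^ 2 := by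
  obtain ⟨P, hP, hPB, htr⟩ := exists_isStarProjection_mul_eq_self_trace_eq_rank B
  have hc : ∑ i, u i ⬝ᵥ P *ᵥ u i ≤ k := by
    rw [← trace_eq_sum_dotProduct_mulVec huon, htr]
    exact_mod_cast hB
  have hkyfan := sum_mul_le_sum_filter_lt k (μ := fun i => σ i ^ 2)
    (fun i j hij => pow_le_pow_left₀ (hσnn j) (hσdec hij) 2) (fun i => sq_nonneg _)
    (fun i => hP.dotProduct_mulVec_nonneg _)
    (fun i => (hP.dotProduct_mulVec_le _).trans_eq (by rw [huon, if_pos rfl])) hc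
  have hsplit := Finset.sum_filter_add_sum_filter_not Finset.univ (fun i : Fin n => (i : ℕ) < k)
    (fun i => σ i ^ 2)
  simp only [not_lt] at hsplit
  have hPZ := frobNorm_sq_eq_trace (P * (Z - B))
  calc ∑ i ∈ Finset.univ.filter (fun i : Fin n => k ≤ (i : ℕ)), σ i ^ 2
      ≤ ∑ i, σ i ^ 2 * (1 - u i ⬝ᵥ P *ᵥ u i) := by
        simp only [mul_sub, mul_one, Finset.sum_sub_distrib]
        linarith
    _ = frobNorm ((1 - P) * (Z - B)) ^ 2 := by
        rw [Matrix.mul_sub (1 - P), Matrix.sub_mul 1 P B, hPB, Matrix.one_mul, sub_self,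
          sub_zero, frobNorm_one_sub_mul_sq huon heig hP]
    _ ≤ frobNorm (Z - B) ^ 2 := by
        rw [frobNorm_sq_eq_trace, frobNorm_sq_eq_trace, hP.trace_mul_transpose_eq_add (Z - B),
          ← hPZ]
        exact le_add_of_nonneg_left (by positivity)

end EckartYoung

/-- Error decomposition for the optimal low-rank solution `A★_k = P_k Y X⁺`:
`‖Y − A★_k X‖_F² = ‖Y − Y X⁺ X‖_F² + ∑_{i>k} σᵢ(Z)²`, and this is the minimal
value of `‖Y − A X‖_F` over matrices of rank ≤ k. -/
theorem stmt17 {n m : ℕ} (k : ℕ)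
    (X Y : Matrix (Fin n) (Fin m) ℝ) (Xp : Matrix (Fin m) (Fin n) ℝ)
    (hXp : IsMoorePenrose X Xp)
    (Z : Matrix (Fin n) (Fin m) ℝ) (hZ : Z = Y * (Xp * X))
    (σ : Fin n → ℝ) (hσdec : Antitone σ) (hσnn : ∀ i, 0 ≤ σ i)
    (u : Fin n → Fin n → ℝ)
    (huon : ∀ i j, u i ⬝ᵥ u j = if i = j then (1 : ℝ) else 0)
    (heig : ∀ i, (Z * Zᵀ) *ᵥ u i = (σ i ^ 2) • u i)
    (Pk : Matrix (Fin n) (Fin n) ℝ)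
    (hPk : Pk = ∑ i ∈ Finset.univ.filter (fun i : Fin n => (i : ℕ) < k),
      Matrix.vecMulVec (u i) (u i)) :
    frobNorm (Y - (Pk * Y * Xp) * X) ^ 2 =
        frobNorm (Y - Y * (Xp * X)) ^ 2 +
          ∑ i ∈ Finset.univ.filter (fun i : Fin n => k ≤ (i : ℕ)), σ i ^ 2 ∧
      ∀ A : Matrix (Fin n) (Fin n) ℝ, A.rank ≤ k →
        Real.sqrt (frobNorm (Y - Y * (Xp * X)) ^ 2 +
            ∑ i ∈ Finset.univ.filter (fun i : Fin n => k ≤ (i : ℕ)), σ i ^ 2) ≤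
          frobNorm (Y - A * X) := by
  have hQ := hXp.isStarProjection_mul
  refine ⟨?_, fun A hA => ?_⟩
  · have hPkZ : Pk * Y * Xp * X = Pk * Z := by rw [hZ]; simp only [Matrix.mul_assoc]
    have hB : Pk * Z * (Xp * X) = Pk * Z := by
      rw [hZ, Matrix.mul_assoc, Matrix.mul_assoc, hQ.isIdempotentElem.eq]
    rw [hPkZ, frobNorm_sub_sq_eq_add hQ Y hB, ← hZ, hPk,
      frobNorm_sub_mul_sum_vecMulVec_sq huon heig]
  · have hB : A * X * (Xp * X) = A * X := by
      rw [Matrix.mul_assoc, ← Matrix.mul_assoc X, hXp.1]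
    refine Real.sqrt_le_iff.2 ⟨Real.sqrt_nonneg _, ?_⟩
    rw [frobNorm_sub_sq_eq_add hQ Y hB, ← hZ]
    gcongr
    exact sum_filter_le_frobNorm_sub_sq huon heig hσdec hσnn ((rank_mul_le_left A X).trans hA)
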